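/- Let Φ be a real number with Φ² = Φ + 1 and let w = (w₁, …, wₙ) be a nonempty word of integers. Then the (1,2) entry (row 1, column 2) of M(Φ, w) equals C·Φ + D, where C = −Σ_{s ≪₁ w} χ(n − |s| − 1) · F_{|s|} · m_s and D = −Σ_{s ≪₁ w} χ(n − |s| − 1) · F_{|s|−1} · m_s, the sums ranging over all subwords s of w with s ≪₁ w. -/

import Mathlib

open Matrix

noncomputable section

/-- The matrix `S = !![0, -1; 1, 0]` over `ℝ`. -/
def S : Matrix (Fin 2) (Fin 2) ℝ := !![0, -1; 1, 0]

/-- The matrix `T(λ) = !![1, λ; 0, 1]` over `ℝ`. -/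
def T (lam : ℝ) : Matrix (Fin 2) (Fin 2) ℝ := !![1, lam; 0, 1]

/-- For a nonempty word `w = (w₁, …, wₙ)` of integers,
`M lam w = T(λ)^{w₁} · S · T(λ)^{w₂} · S · ⋯ · S · T(λ)^{wₙ}`. -/
def M (lam : ℝ) : List ℤ → Matrix (Fin 2) (Fin 2) ℝ
  | [] => 1
  | a :: t => T lam ^ a * (t.map fun b => S * T lam ^ b).prod

/-- The 4-periodic function with `χ(0) = 0, χ(1) = 1, χ(2) = 0, χ(3) = -1`
(the nontrivial Dirichlet character mod 4, extended to all integers). -/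
def chi (m : ℤ) : ℤ := if m % 4 = 1 then 1 else if m % 4 = 3 then -1 else 0

/-- The Fibonacci numbers, extended so that `F₋₁ = 1` (the only negative index used). -/
def fibz (m : ℤ) : ℤ := if m < 0 then 1 else (Nat.fib m.toNat : ℤ)

/-- A subword of `(w₁, …, wₙ)` is encoded by its set `J` of (0-based) positions;
the 1-based indices `j₁ < ⋯ < j_m` are the sorted elements of `J` plus one.
`ll1 J` says `jᵢ ≡ i (mod 2)`, i.e. `s ≪₁ w`, for all `i` (1-based), stated here in 0-based form. -/
def ll1 {n : ℕ} (J : Finset (Fin n)) : Prop :=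
  ∀ i : ℕ, ∀ hi : i < (J.sort (· ≤ ·)).length,
    ((J.sort (· ≤ ·)).get ⟨i, hi⟩).val % 2 = i % 2

instance {n : ℕ} : DecidablePred (ll1 (n := n)) := fun _ =>
  Nat.decidableBallLT _ _


/-!
Right multiplication by `S` turns `M(λ, w)` into the product of the factors
`T(λ)^{wᵢ} S = !![wᵢλ, -1; 1, 0]`, so `M(λ, w)₀₁` and `M(λ, w)₁₁` form the first column of that
product and obey a two-term recursion in the first letter of `w`. Splitting the subwords of `w` by
whether they use its first position shows that, for every `λ`, the sums
`∑_{s ≪₁ w} χ(n - |s| - 1) λ^|s| m_s` and `∑_{s ≪₃ w} χ(n - |s| - 2) λ^|s| m_s` obey the same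
recursion (using `χ(k + 2) = -χ(k)`), with the same initial values. At `λ = Φ` one then expands
`Φ^m = F_m Φ + F_{m-1}`.
-/

open Finset

section Alternating

variable {n : ℕ}

-- `IsAlternating 0` is the paper's `≪₁` and `IsAlternating 1` its `≪₃`, with 0-based positions.
def IsAlternating (p : ZMod 2) (J : Finset (Fin n)) : Prop :=
  ∀ i (hi : i < (J.sort (· ≤ ·)).length), (((J.sort (· ≤ ·))[i] : ℕ) : ZMod 2) = i + p

instance (p : ZMod 2) : DecidablePred (IsAlternating (n := n) p) := fun _ =>
  Nat.decidableBallLT _ _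

lemma ll1_iff_isAlternating_zero (J : Finset (Fin n)) : ll1 J ↔ IsAlternating 0 J := by
  simp only [ll1, IsAlternating, List.get_eq_getElem, add_zero, ZMod.natCast_eq_natCast_iff']

lemma sort_map_succEmb (J : Finset (Fin n)) :
    (J.map (Fin.succEmb n)).sort (· ≤ ·) = (J.sort (· ≤ ·)).map Fin.succ :=
  (map_sort _ _ _ _ fun _ _ _ _ => Fin.succ_le_succ_iff.symm).symm

lemma isAlternating_map_succEmb {p : ZMod 2} {J : Finset (Fin n)} :
    IsAlternating p (J.map (Fin.succEmb n)) ↔ IsAlternating (p + 1) J := by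
  simp only [IsAlternating, sort_map_succEmb, List.length_map, List.getElem_map, Fin.val_succ,
    Nat.cast_succ]
  refine forall₂_congr fun i hi => ?_
  generalize (((J.sort (· ≤ ·))[i] : ℕ) : ZMod 2) = a
  generalize (i : ZMod 2) = b
  revert a b p
  decide

lemma isAlternating_insert_zero {p : ZMod 2} {J : Finset (Fin n)} :
    IsAlternating p (insert 0 (J.map (Fin.succEmb n))) ↔ p = 0 ∧ IsAlternating p J := by
  rw [IsAlternating, sort_insert _ (fun b _ => Fin.zero_le b) (by simp), sort_map_succEmb]
  simp only [List.length_cons, List.length_map]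
  constructor
  · intro h
    refine ⟨by simpa [eq_comm] using h 0 (by omega), fun i hi => ?_⟩
    simpa [add_right_comm _ _ p] using h (i + 1) (by omega)
  · rintro ⟨rfl, h⟩ (_ | i) hi
    · simp
    · simpa using h i (by omega)

end Alternating

lemma sum_finset_fin_succ {M : Type*} [AddCommMonoid M] {n : ℕ} (f : Finset (Fin (n + 1)) → M) :
    ∑ K, f K = ∑ J : Finset (Fin n), f (J.map (Fin.succEmb n)) +
      ∑ J : Finset (Fin n), f (insert 0 (J.map (Fin.succEmb n))) := by
  have hpow : (univ.map ⟨Fin.succ, Fin.succ_injective n⟩).powerset =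
      univ.image (Finset.map (Fin.succEmb n)) := by
    ext K
    simp [subset_map_iff, eq_comm, Fin.succEmb]
  have hinj : Set.InjOn (Finset.map (Fin.succEmb n)) ↑(univ : Finset (Finset (Fin n))) :=
    (Finset.map_injective _).injOn
  rw [← powerset_univ, Fin.univ_succ, cons_eq_insert, sum_powerset_insert (by simp)]
  rw [hpow, sum_image hinj, sum_image hinj]

section SubwordSum

variable {n : ℕ}

def subwordSum (p : ZMod 2) (c : ℕ → ℝ) (x : Fin n → ℝ) : ℝ :=
  ∑ J with IsAlternating p J, c #J * ∏ j ∈ J, x j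

lemma subwordSum_succ (p : ZMod 2) (c : ℕ → ℝ) (x : Fin (n + 1) → ℝ) :
    subwordSum p c x =
      (if p = 0 then x 0 * subwordSum p (fun m => c (m + 1)) (Fin.tail x) else 0) +
        subwordSum (p + 1) c (Fin.tail x) := by
  have h0 (J : Finset (Fin n)) : 0 ∉ J.map (Fin.succEmb n) := by simp
  simp only [subwordSum, sum_filter]
  rw [sum_finset_fin_succ, add_comm]
  congr 1
  · split_ifs with hp
    · rw [mul_sum]
      refine sum_congr rfl fun J _ => ?_
      simp only [isAlternating_insert_zero, hp, true_and, card_insert_of_notMem (h0 J),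
        prod_insert (h0 J), card_map, prod_map]
      split_ifs
      · simp only [Fin.coe_succEmb, Fin.tail]
        ring
      · rw [mul_zero]
    · simp [isAlternating_insert_zero, hp]
  · simp [isAlternating_map_succEmb, prod_map, Fin.tail]

lemma subwordSum_fin_zero (p : ZMod 2) (c : ℕ → ℝ) (x : Fin 0 → ℝ) :
    subwordSum p c x = c 0 := by
  have hempty : IsAlternating p (∅ : Finset (Fin 0)) := by simp [IsAlternating]
  simp [subwordSum, univ_unique, Subsingleton.elim default (∅ : Finset (Fin 0)),
    filter_singleton, hempty]

lemma subwordSum_neg (p : ZMod 2) (c : ℕ → ℝ) (x : Fin n → ℝ) :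
    subwordSum p (fun m => -c m) x = -subwordSum p c x := by
  simp only [subwordSum, neg_mul, sum_neg_distrib]

end SubwordSum

lemma chi_add_two (m : ℤ) : chi (m + 2) = -chi m := by
  unfold chi
  have : (m + 2) % 4 = (m % 4 + 2) % 4 := by omega
  rcases (by omega : m % 4 = 0 ∨ m % 4 = 1 ∨ m % 4 = 2 ∨ m % 4 = 3) with h | h | h | h <;>
    simp [this, h]

lemma pow_eq_fibz_mul_add {Φ : ℝ} (hΦ : Φ ^ 2 = Φ + 1) (m : ℕ) :
    Φ ^ m = fibz m * Φ + fibz ((m : ℤ) - 1) := by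
  have hfib (k : ℕ) : Φ ^ (k + 1) = Nat.fib (k + 1) * Φ + Nat.fib k := by
    induction k with
    | zero => simp
    | succ k ih =>
      rw [pow_succ, ih, Nat.fib_add_two]
      push_cast
      linear_combination (Nat.fib (k + 1) : ℝ) * hΦ
  cases m with
  | zero => simp [fibz]
  | succ k =>
    have hk : ¬((k : ℤ) + 1 < 0) := by omega
    have hk' : ¬((k : ℤ) < 0) := by omega
    simp [fibz, hfib, hk, hk']

lemma T_mul_T (a b : ℝ) : T a * T b = T (a + b) := by
  simp [T, add_comm]

lemma T_pow_natCast (lam : ℝ) (k : ℕ) : T lam ^ k = T (k * lam) := by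
  induction k with
  | zero => simp [T, Matrix.one_fin_two]
  | succ k ih => rw [pow_succ, ih, T_mul_T]; push_cast; ring_nf

lemma T_zpow (lam : ℝ) (a : ℤ) : T lam ^ a = T (a * lam) := by
  cases a with
  | ofNat k => simpa using T_pow_natCast lam k
  | negSucc k =>
    rw [zpow_negSucc, T_pow_natCast]
    refine Matrix.inv_eq_right_inv ?_
    rw [T_mul_T]
    simp [T, Matrix.one_fin_two, Int.negSucc_eq]
    ring

lemma T_zpow_mul_S (lam : ℝ) (a : ℤ) : T lam ^ a * S = !![a * lam, -1; 1, 0] := by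
  rw [T_zpow]
  simp [T, S]

lemma prod_map_mul_mul_eq_mul_prod_map_mul {α R : Type*} [Monoid R] (s : R) (t : α → R)
    (l : List α) :
    (l.map fun b => s * t b).prod * s = s * (l.map fun b => t b * s).prod := by
  induction l with
  | nil => simp
  | cons b l ih => simp only [List.map_cons, List.prod_cons, mul_assoc, ih]

lemma M_mul_S (lam : ℝ) {l : List ℤ} (hl : l ≠ []) :
    M lam l * S = (l.map fun a => T lam ^ a * S).prod := by
  obtain ⟨a, t, rfl⟩ := List.exists_cons_of_ne_nil hl
  rw [M, mul_assoc, prod_map_mul_mul_eq_mul_prod_map_mul, List.map_cons, List.prod_cons, mul_assoc]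

lemma prod_T_zpow_mul_S_first_column (lam : ℝ) {n : ℕ} (w : Fin n → ℤ) :
    ((List.ofFn w).map fun a => T lam ^ a * S).prod 0 0 =
        -subwordSum 0 (fun m => chi ((n : ℤ) - m - 1)) (fun j => lam * w j) ∧
      ((List.ofFn w).map fun a => T lam ^ a * S).prod 1 0 =
        -subwordSum 1 (fun m => chi ((n : ℤ) - m - 2)) (fun j => lam * w j) := by
  induction n with
  | zero => norm_num [subwordSum_fin_zero, chi]
  | succ n ih =>
    obtain ⟨ih₀, ih₁⟩ := ih fun i => w i.succ
    have hχ₀ : (fun m : ℕ => (chi (((n + 1 : ℕ) : ℤ) - m - 1) : ℝ)) =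
        fun m : ℕ => -(chi ((n : ℤ) - m - 2) : ℝ) := by
      funext m
      rw [← Int.cast_neg, ← chi_add_two]
      congr 2
      push_cast
      ring
    have hχ₁ : (fun m : ℕ => (chi (((n + 1 : ℕ) : ℤ) - m - 2) : ℝ)) =
        fun m : ℕ => (chi ((n : ℤ) - m - 1) : ℝ) := by
      funext m
      congr 2
      push_cast
      ring
    have hχ₂ : (fun m : ℕ => (chi (((n + 1 : ℕ) : ℤ) - (m + 1 : ℕ) - 1) : ℝ)) =
        fun m : ℕ => (chi ((n : ℤ) - m - 1) : ℝ) := by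
      funext m
      congr 2
      push_cast
      ring
    rw [subwordSum_succ, subwordSum_succ, if_pos rfl, if_neg one_ne_zero,
      show (1 + 1 : ZMod 2) = 0 by decide, hχ₀, hχ₁, hχ₂, subwordSum_neg,
      List.ofFn_succ, List.map_cons, List.prod_cons, T_zpow_mul_S]
    simp only [mul_apply, Fin.sum_univ_two, ih₀, ih₁, Fin.tail_def, zero_add]
    simp only [of_apply, cons_val', cons_val_zero, cons_val_one, cons_val_fin_one]
    constructor <;> ring

theorem stmt7 (Φ : ℝ) (hΦ : Φ ^ 2 = Φ + 1) (n : ℕ) (hn : 0 < n) (w : Fin n → ℤ) :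
    M Φ (List.ofFn w) 0 1 =
      -((∑ J ∈ Finset.univ.filter (fun J : Finset (Fin n) => ll1 J),
          chi ((n : ℤ) - J.card - 1) * fibz (J.card : ℤ) * ∏ j ∈ J, w j : ℤ) : ℝ) * Φ +
      -((∑ J ∈ Finset.univ.filter (fun J : Finset (Fin n) => ll1 J),
          chi ((n : ℤ) - J.card - 1) * fibz ((J.card : ℤ) - 1) * ∏ j ∈ J, w j : ℤ) : ℝ) := by
  have hw : List.ofFn w ≠ [] := by simpa using hn.ne'
  have hM : M Φ (List.ofFn w) 0 1 = (M Φ (List.ofFn w) * S) 0 0 := by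
    simp [mul_apply, S]
  rw [hM, M_mul_S Φ hw, (prod_T_zpow_mul_S_first_column Φ w).1, subwordSum,
    ← filter_congr fun J _ => ll1_iff_isAlternating_zero J, neg_mul, ← neg_add]
  push_cast
  rw [sum_mul, ← sum_add_distrib]
  refine congrArg Neg.neg (sum_congr rfl fun J _ => ?_)
  rw [prod_mul_distrib, prod_const, pow_eq_fibz_mul_add hΦ]
  ring
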